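/- For every x ∈ H with x ≠ 0, all the series below converge absolutely and the following exact identity holds: (1/2)∑_{k≥1} α_k(x)·‖x‖^{-2}⟨x,w_k⟩ + (1/2)∑_{k≥1} β_k(x) + (1/2)∑_{k≥1} ‖x‖^{-2}( ‖σ_k(x)‖² − 2‖x‖^{-2}⟨x,σ_k(x)⟩² ) = (1/2)c²‖x‖^{2η−2}·[ (1−α)·T + ( (1−α)²(η−1) − (1−α) )·‖x‖^{-2}·∑_{k≥1} λ_k⟨x,w_k⟩² ]. -/
import Mathlib


open scoped InnerProductSpace

/-- `σ_k(x) = c √λ_k ‖x‖^η (w_k − α‖x‖⁻²⟨x,w_k⟩ x)`. -/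
noncomputable def stmt12SigmaK {H : Type*} [NormedAddCommGroup H] [InnerProductSpace ℝ H]
    (w : ℕ → H) (lam : ℕ → ℝ) (c α η : ℝ) (x : H) (k : ℕ) : H :=
  (c * Real.sqrt (lam k) * ‖x‖ ^ η) • (w k - (α * ‖x‖ ^ (-2 : ℝ) * ⟪x, w k⟫_ℝ) • x)

/-- `α_k(x) = c²λ_k(η−α−ηα)‖x‖^{2η−2}⟨x,w_k⟩`. -/
noncomputable def stmt12AlphaK {H : Type*} [NormedAddCommGroup H] [InnerProductSpace ℝ H]
    (w : ℕ → H) (lam : ℕ → ℝ) (c α η : ℝ) (x : H) (k : ℕ) : ℝ :=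
  c ^ 2 * lam k * (η - α - η * α) * ‖x‖ ^ (2 * η - 2) * ⟪x, w k⟫_ℝ

/-- `β_k(x) = c²λ_k‖x‖^{2η−2}((α²η−α(η−2))‖x‖⁻²⟨x,w_k⟩² − α)` (for `‖w_k‖ = 1`). -/
noncomputable def stmt12BetaK {H : Type*} [NormedAddCommGroup H] [InnerProductSpace ℝ H]
    (w : ℕ → H) (lam : ℕ → ℝ) (c α η : ℝ) (x : H) (k : ℕ) : ℝ :=
  c ^ 2 * lam k * ‖x‖ ^ (2 * η - 2) *
    ((α ^ 2 * η - α * (η - 2)) * ‖x‖ ^ (-2 : ℝ) * ⟪x, w k⟫_ℝ ^ 2 - α)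

/-- For an orthonormal family `(w_k)`, summable nonnegative `(λ_k)`
with `T = ∑ λ_k`, and every `x ≠ 0`, all the series below converge absolutely and
`½∑_k α_k(x)‖x‖⁻²⟨x,w_k⟩ + ½∑_k β_k(x)
  + ½∑_k ‖x‖⁻²(‖σ_k(x)‖² − 2‖x‖⁻²⟨x,σ_k(x)⟩²)
  = ½c²‖x‖^{2η−2}[(1−α)T + ((1−α)²(η−1) − (1−α))‖x‖⁻²∑_k λ_k⟨x,w_k⟩²]`. -/
theorem stmt_12
    {H : Type*} [NormedAddCommGroup H] [InnerProductSpace ℝ H] [CompleteSpace H]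
    (w : ℕ → H) (hw : Orthonormal ℝ w)
    (lam : ℕ → ℝ) (hlam : ∀ k, 0 ≤ lam k) (hsum : Summable lam)
    (c α η : ℝ) (x : H) (hx : x ≠ 0) :
    (Summable fun k => |stmt12AlphaK w lam c α η x k * (‖x‖ ^ (-2 : ℝ) * ⟪x, w k⟫_ℝ)|) ∧
    (Summable fun k => |stmt12BetaK w lam c α η x k|) ∧
    (Summable fun k => |‖x‖ ^ (-2 : ℝ) *
      (‖stmt12SigmaK w lam c α η x k‖ ^ 2 -
        2 * ‖x‖ ^ (-2 : ℝ) * ⟪x, stmt12SigmaK w lam c α η x k⟫_ℝ ^ 2)|) ∧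
    (Summable fun k => lam k * ⟪x, w k⟫_ℝ ^ 2) ∧
    (1 / 2) * (∑' k, stmt12AlphaK w lam c α η x k * (‖x‖ ^ (-2 : ℝ) * ⟪x, w k⟫_ℝ)) +
      (1 / 2) * (∑' k, stmt12BetaK w lam c α η x k) +
      (1 / 2) * (∑' k, ‖x‖ ^ (-2 : ℝ) *
        (‖stmt12SigmaK w lam c α η x k‖ ^ 2 -
          2 * ‖x‖ ^ (-2 : ℝ) * ⟪x, stmt12SigmaK w lam c α η x k⟫_ℝ ^ 2)) =
    (1 / 2) * c ^ 2 * ‖x‖ ^ (2 * η - 2) *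
      ((1 - α) * (∑' k, lam k) +
        ((1 - α) ^ 2 * (η - 1) - (1 - α)) * ‖x‖ ^ (-2 : ℝ) *
          ∑' k, lam k * ⟪x, w k⟫_ℝ ^ 2) := by
  have hn : (0:ℝ) < ‖x‖ := norm_pos_iff.mpr hx
  have hn2 : (‖x‖:ℝ) ^ 2 ≠ 0 := by positivity
  have hr : ‖x‖ ^ (-2:ℝ) = ((‖x‖:ℝ) ^ 2)⁻¹ := by
    rw [show (-2:ℝ) = -(2:ℝ) by norm_num, Real.rpow_neg (norm_nonneg x), Real.rpow_two]
  have hp : ‖x‖ ^ (2*η-2:ℝ) = ((‖x‖:ℝ) ^ η) ^ 2 * ((‖x‖:ℝ) ^ 2)⁻¹ := by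
    rw [show (2*η-2:ℝ) = η*2 + -2 by ring, Real.rpow_add hn,
      Real.rpow_mul (norm_nonneg x), Real.rpow_two, Real.rpow_neg (norm_nonneg x),
      Real.rpow_two]
  -- summability of lam k * ⟪x,w k⟫²
  have hS : Summable (fun k => lam k * ⟪x, w k⟫_ℝ ^ 2) := by
    refine Summable.of_nonneg_of_le (fun k => mul_nonneg (hlam k) (sq_nonneg _)) (fun k => ?_)
      (hsum.mul_right ((‖x‖:ℝ)^2))
    have h1 : |⟪x, w k⟫_ℝ| ≤ ‖x‖ * ‖w k‖ := abs_real_inner_le_norm x (w k)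
    rw [hw.1 k, mul_one] at h1
    have h2 : ⟪x, w k⟫_ℝ ^ 2 ≤ ‖x‖ ^ 2 := by
      nlinarith [abs_nonneg (⟪x, w k⟫_ℝ), sq_abs (⟪x, w k⟫_ℝ)]
    exact mul_le_mul_of_nonneg_left h2 (hlam k)
  -- pointwise identities
  have key1 : ∀ k, stmt12AlphaK w lam c α η x k * (‖x‖ ^ (-2:ℝ) * ⟪x, w k⟫_ℝ)
      = (c^2*(η-α-η*α)*(((‖x‖:ℝ)^η)^2*((‖x‖:ℝ)^2)⁻¹)*((‖x‖:ℝ)^2)⁻¹)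
        * (lam k * ⟪x, w k⟫_ℝ ^ 2) := by
    intro k
    simp only [stmt12AlphaK, hr, hp]
    ring
  have key2 : ∀ k, stmt12BetaK w lam c α η x k
      = (c^2*(((‖x‖:ℝ)^η)^2*((‖x‖:ℝ)^2)⁻¹)*(α^2*η-α*(η-2))*((‖x‖:ℝ)^2)⁻¹)
          * (lam k * ⟪x, w k⟫_ℝ ^ 2)
        + (-(c^2*(((‖x‖:ℝ)^η)^2*((‖x‖:ℝ)^2)⁻¹)*α)) * lam k := by
    intro k
    simp only [stmt12BetaK, hr, hp]
    ring
  have hinner : ∀ k, ⟪x, stmt12SigmaK w lam c α η x k⟫_ℝ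
      = (c * Real.sqrt (lam k) * ‖x‖ ^ η) * ((1-α) * ⟪x, w k⟫_ℝ) := by
    intro k
    simp only [stmt12SigmaK, real_inner_smul_right, inner_sub_right,
      real_inner_self_eq_norm_sq, hr]
    have h1 : ((‖x‖:ℝ)^2)⁻¹ * ‖x‖^2 = 1 := inv_mul_cancel₀ hn2
    linear_combination (-(c * Real.sqrt (lam k) * ‖x‖ ^ η * α * ⟪x, w k⟫_ℝ)) * h1
  have hnormsq : ∀ k, ‖stmt12SigmaK w lam c α η x k‖ ^ 2
      = c^2 * lam k * ((‖x‖:ℝ)^η)^2 *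
          (1 - (2*α - α^2) * ((‖x‖:ℝ)^2)⁻¹ * ⟪x, w k⟫_ℝ ^ 2) := by
    intro k
    set s := Real.sqrt (lam k) with hsdef
    have hs : s ^ 2 = lam k := Real.sq_sqrt (hlam k)
    simp only [stmt12SigmaK, norm_smul, mul_pow, Real.norm_eq_abs, sq_abs,
      norm_sub_sq_real, real_inner_smul_right, real_inner_comm (w k) x, hw.1 k, hr]
    rw [← hsdef, ← hs]
    field_simp
    ring
  have key3 : ∀ k, ‖x‖ ^ (-2:ℝ) * (‖stmt12SigmaK w lam c α η x k‖ ^ 2 -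
        2 * ‖x‖ ^ (-2:ℝ) * ⟪x, stmt12SigmaK w lam c α η x k⟫_ℝ ^ 2)
      = (c^2 * (((‖x‖:ℝ)^η)^2*((‖x‖:ℝ)^2)⁻¹)) * lam k
        + (c^2*(((‖x‖:ℝ)^η)^2*((‖x‖:ℝ)^2)⁻¹)*((α^2-2*α)-2*(1-α)^2)*((‖x‖:ℝ)^2)⁻¹)
          * (lam k * ⟪x, w k⟫_ℝ ^ 2) := by
    intro k
    set s := Real.sqrt (lam k) with hsdef
    have hs : s ^ 2 = lam k := Real.sq_sqrt (hlam k)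
    rw [hinner k, hnormsq k, hr, ← hsdef, ← hs]
    field_simp
    ring
  -- summability of the three series
  have s1 : Summable (fun k => stmt12AlphaK w lam c α η x k *
      (‖x‖ ^ (-2:ℝ) * ⟪x, w k⟫_ℝ)) := by
    simp only [key1]; exact hS.mul_left _
  have s2 : Summable (fun k => stmt12BetaK w lam c α η x k) := by
    simp only [key2]; exact (hS.mul_left _).add (hsum.mul_left _)
  have s3 : Summable (fun k => ‖x‖ ^ (-2:ℝ) * (‖stmt12SigmaK w lam c α η x k‖ ^ 2 -
      2 * ‖x‖ ^ (-2:ℝ) * ⟪x, stmt12SigmaK w lam c α η x k⟫_ℝ ^ 2)) := by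
    simp only [key3]; exact (hsum.mul_left _).add (hS.mul_left _)
  refine ⟨s1.abs, s2.abs, s3.abs, hS, ?_⟩
  -- compute the tsums
  have t1 : (∑' k, stmt12AlphaK w lam c α η x k * (‖x‖ ^ (-2:ℝ) * ⟪x, w k⟫_ℝ))
      = (c^2*(η-α-η*α)*(((‖x‖:ℝ)^η)^2*((‖x‖:ℝ)^2)⁻¹)*((‖x‖:ℝ)^2)⁻¹)
        * ∑' k, lam k * ⟪x, w k⟫_ℝ ^ 2 := by
    simp only [key1]; exact tsum_mul_left
  have t2 : (∑' k, stmt12BetaK w lam c α η x k)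
      = (c^2*(((‖x‖:ℝ)^η)^2*((‖x‖:ℝ)^2)⁻¹)*(α^2*η-α*(η-2))*((‖x‖:ℝ)^2)⁻¹)
          * (∑' k, lam k * ⟪x, w k⟫_ℝ ^ 2)
        + (-(c^2*(((‖x‖:ℝ)^η)^2*((‖x‖:ℝ)^2)⁻¹)*α)) * ∑' k, lam k := by
    simp only [key2]
    rw [Summable.tsum_add (hS.mul_left _) (hsum.mul_left _), tsum_mul_left, tsum_mul_left]
  have t3 : (∑' k, ‖x‖ ^ (-2:ℝ) * (‖stmt12SigmaK w lam c α η x k‖ ^ 2 -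
        2 * ‖x‖ ^ (-2:ℝ) * ⟪x, stmt12SigmaK w lam c α η x k⟫_ℝ ^ 2))
      = (c^2 * (((‖x‖:ℝ)^η)^2*((‖x‖:ℝ)^2)⁻¹)) * (∑' k, lam k)
        + (c^2*(((‖x‖:ℝ)^η)^2*((‖x‖:ℝ)^2)⁻¹)*((α^2-2*α)-2*(1-α)^2)*((‖x‖:ℝ)^2)⁻¹)
          * ∑' k, lam k * ⟪x, w k⟫_ℝ ^ 2 := by
    simp only [key3]
    rw [Summable.tsum_add (hsum.mul_left _) (hS.mul_left _), tsum_mul_left, tsum_mul_left]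
  rw [t1, t2, t3, hr, hp]
  field_simp
  ring
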